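/- arXiv:2409.18376 — 3 statements merged into one kernel-verified Lean document; each statement's English description precedes it below -/
import Mathlib

section
/- For every ε > 0 and all real numbers lo, hi, y with lo ≤ hi, the smooth saturation function S^ε(y) = lo + ε·ln(1 + exp((hi − lo)/ε)/(1 + exp((hi − y)/ε))) approximates the clamp of y to [lo, hi] with error at most 2ε·ln 2: |S^ε(y) − min{max{y, lo}, hi}| ≤ 2ε·ln 2. -/
/-!
Writing `softplus ε x = ε·ln(1 + exp(x/ε))`, the smooth saturation is
`lo + softplus ε (hi - lo - softplus ε (hi - y))`, while for `lo ≤ hi` the clamp is the same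
expression with `softplus ε` replaced by the ramp `x ↦ max x 0`. The softplus exceeds the ramp
by at most `ε·ln 2`, and the ramp is 1-Lipschitz, so each of the two substitutions costs at
most `ε·ln 2`.
-/

open Real

noncomputable def softplus (ε x : ℝ) : ℝ := ε * log (1 + exp (x / ε))

lemma max_zero_le_log_one_add_exp (t : ℝ) : max t 0 ≤ log (1 + exp t) := by
  rw [le_log_iff_exp_le (by positivity)]
  rcases le_total t 0 with ht | ht
  · rw [max_eq_right ht, exp_zero]
    linarith [exp_pos t]
  · rw [max_eq_left ht]
    linarith

lemma log_one_add_exp_le (t : ℝ) : log (1 + exp t) ≤ max t 0 + log 2 := by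
  rw [log_le_iff_le_exp (by positivity), exp_add, exp_log two_pos]
  have h1 : 1 ≤ exp (max t 0) := one_le_exp (le_max_right t 0)
  have ht : exp t ≤ exp (max t 0) := exp_le_exp.mpr (le_max_left t 0)
  linarith

section softplus

variable {ε : ℝ}

lemma max_zero_le_softplus (hε : 0 < ε) (x : ℝ) : max x 0 ≤ softplus ε x := by
  have h := mul_le_mul_of_nonneg_left (max_zero_le_log_one_add_exp (x / ε)) hε.le
  rwa [mul_max_of_nonneg _ _ hε.le, mul_div_cancel₀ x hε.ne', mul_zero] at h

lemma softplus_le_max_zero_add (hε : 0 < ε) (x : ℝ) : softplus ε x ≤ max x 0 + ε * log 2 := by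
  have h := mul_le_mul_of_nonneg_left (log_one_add_exp_le (x / ε)) hε.le
  rwa [mul_add, mul_max_of_nonneg _ _ hε.le, mul_div_cancel₀ x hε.ne', mul_zero] at h

lemma abs_softplus_sub_max_zero_le (hε : 0 < ε) (x : ℝ) :
    |softplus ε x - max x 0| ≤ ε * log 2 := by
  rw [abs_le]
  constructor <;> linarith [max_zero_le_softplus hε x, softplus_le_max_zero_add hε x,
    mul_nonneg hε.le (log_nonneg one_le_two)]

lemma abs_softplus_sub_max_zero_le_abs_sub_add (hε : 0 < ε) (x y : ℝ) :
    |softplus ε x - max y 0| ≤ |x - y| + ε * log 2 :=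
  calc |softplus ε x - max y 0|
      ≤ |softplus ε x - max x 0| + |max x 0 - max y 0| := abs_sub_le _ _ _
    _ ≤ ε * log 2 + |x - y| :=
        add_le_add (abs_softplus_sub_max_zero_le hε x) (abs_max_sub_max_le_abs x y 0)
    _ = |x - y| + ε * log 2 := add_comm _ _

lemma mul_log_one_add_exp_div_one_add_exp_eq_softplus (hε : 0 < ε) (lo hi y : ℝ) :
    ε * log (1 + exp ((hi - lo) / ε) / (1 + exp ((hi - y) / ε)))
      = softplus ε (hi - lo - softplus ε (hi - y)) := by
  have hsub : (hi - lo - softplus ε (hi - y)) / ε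
      = (hi - lo) / ε - log (1 + exp ((hi - y) / ε)) := by
    rw [softplus, sub_div, mul_div_cancel_left₀ _ hε.ne']
  rw [softplus, hsub, exp_sub, exp_log (by positivity)]

end softplus

lemma min_max_eq_add_max_sub_max {lo hi : ℝ} (h : lo ≤ hi) (y : ℝ) :
    min (max y lo) hi = lo + max (hi - lo - max (hi - y) 0) 0 := by
  rcases le_total y lo with hyl | hyl
  · rw [max_eq_right hyl, min_eq_left h, max_eq_left (by linarith : 0 ≤ hi - y),
      max_eq_right (by linarith)]
    ring
  rcases le_total y hi with hyh | hyh
  · rw [max_eq_left hyl, min_eq_left hyh, max_eq_left (by linarith : 0 ≤ hi - y),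
      max_eq_left (by linarith)]
    ring
  · rw [max_eq_left hyl, min_eq_right hyh, max_eq_right (by linarith : hi - y ≤ 0),
      max_eq_left (by linarith)]
    ring

/-- For every ε > 0 and all real `lo ≤ hi` and y, the smooth saturation
function `S^ε(y) = lo + ε·ln(1 + exp((hi − lo)/ε)/(1 + exp((hi − y)/ε)))`
approximates the clamp of y to `[lo, hi]` with error at most `2ε·ln 2`. -/
theorem smooth_clamp_error_bound (ε : ℝ) (hε : 0 < ε) (lo hi y : ℝ) (h : lo ≤ hi) :
    |lo + ε * Real.log (1 + Real.exp ((hi - lo) / ε) / (1 + Real.exp ((hi - y) / ε)))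
        - min (max y lo) hi| ≤ 2 * ε * Real.log 2 := by
  rw [mul_log_one_add_exp_div_one_add_exp_eq_softplus hε, min_max_eq_add_max_sub_max h,
    add_sub_add_left_eq_sub]
  calc |softplus ε (hi - lo - softplus ε (hi - y)) - max (hi - lo - max (hi - y) 0) 0|
      ≤ |(hi - lo - softplus ε (hi - y)) - (hi - lo - max (hi - y) 0)| + ε * log 2 :=
        abs_softplus_sub_max_zero_le_abs_sub_add hε _ _
    _ = |softplus ε (hi - y) - max (hi - y) 0| + ε * log 2 := by
        rw [sub_sub_sub_cancel_left, abs_sub_comm]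
    _ ≤ ε * log 2 + ε * log 2 := by
        gcongr; exact abs_softplus_sub_max_zero_le hε _
    _ = 2 * ε * log 2 := by ring
end

section
/- For every ε > 0, all generator bounds P̲ ≤ P̄, base-case output P₀, participation factor α, and perturbation Δ, the smooth post-contingency generator response P^ε(Δ) = P̲ + ε·ln(1 + exp((P̄ − P̲)/ε)/(1 + exp((P̄ − P₀ − αΔ)/ε))) satisfies |P^ε(Δ) − min{max{P₀ + αΔ, P̲}, P̄}| ≤ 2ε·ln 2; i.e. it approximates the saturated droop response P₀ + αΔ clamped to [P̲, P̄] with error at most 2ε·ln 2. -/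
private lemma softplus_approx (x : ℝ) :
    |Real.log (1 + Real.exp x) - max x 0| ≤ Real.log 2 := by
  have hx : (0:ℝ) < 1 + Real.exp x := by positivity
  rw [abs_sub_le_iff]
  constructor
  · have h1 : (1:ℝ) + Real.exp x ≤ 2 * Real.exp (max x 0) := by
      have h2 : (1:ℝ) ≤ Real.exp (max x 0) := by
        rw [show (1:ℝ) = Real.exp 0 by simp]
        exact Real.exp_le_exp.2 (le_max_right _ _)
      have h3 : Real.exp x ≤ Real.exp (max x 0) := Real.exp_le_exp.2 (le_max_left _ _)
      linarith
    have := Real.log_le_log hx h1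
    rw [Real.log_mul (by norm_num) (Real.exp_ne_zero _), Real.log_exp] at this
    linarith
  · have h1 : Real.exp (max x 0) ≤ 1 + Real.exp x := by
      rcases le_total x 0 with hx0 | hx0
      · rw [max_eq_right hx0]
        simp [Real.exp_nonneg x, le_add_of_nonneg_right (Real.exp_nonneg x)]
      · rw [max_eq_left hx0]; linarith
    have := Real.log_le_log (Real.exp_pos _) h1
    rw [Real.log_exp] at this
    have h2 : (0:ℝ) ≤ Real.log 2 := Real.log_nonneg (by norm_num)
    linarith

private lemma max_lipschitz (x y : ℝ) : |max x 0 - max y 0| ≤ |x - y| := by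
  rcases le_total x 0 with hx | hx <;> rcases le_total y 0 with hy | hy <;>
    rw [abs_sub_le_iff] <;> constructor <;>
    simp [max_eq_left, max_eq_right, *] <;>
    cases' abs_cases (x - y) with hc hc <;> linarith

private lemma key_bound (a b : ℝ) (ha : 0 ≤ a) :
    |Real.log (1 + Real.exp (a - Real.log (1 + Real.exp b)))
      - (a - max (min a b) 0)| ≤ 2 * Real.log 2 := by
  have hid : a - max (min a b) 0 = max (a - max b 0) 0 := by
    simp only [max_def, min_def]
    split_ifs <;> linarith
  rw [hid]
  set fb := Real.log (1 + Real.exp b) with hfb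
  calc |Real.log (1 + Real.exp (a - fb)) - max (a - max b 0) 0|
      ≤ |Real.log (1 + Real.exp (a - fb)) - max (a - fb) 0|
        + |max (a - fb) 0 - max (a - max b 0) 0| := abs_sub_le _ _ _
    _ ≤ Real.log 2 + Real.log 2 := by
        gcongr
        · exact softplus_approx _
        · calc |max (a - fb) 0 - max (a - max b 0) 0|
              ≤ |(a - fb) - (a - max b 0)| := max_lipschitz _ _
            _ = |fb - max b 0| := by rw [show (a - fb) - (a - max b 0) = -(fb - max b 0) by ring, abs_neg]
            _ ≤ Real.log 2 := softplus_approx b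
    _ = 2 * Real.log 2 := by ring

/-- For every ε > 0, generator bounds `Pmin ≤ Pmax`, base-case output `P₀`,
participation factor `α`, and perturbation `Δ`, the smooth post-contingency
generator response
`P^ε(Δ) = Pmin + ε·ln(1 + exp((Pmax − Pmin)/ε)/(1 + exp((Pmax − P₀ − αΔ)/ε)))`
approximates the droop response `P₀ + αΔ` clamped to `[Pmin, Pmax]` with error
at most `2ε·ln 2`. -/
theorem smooth_generator_response_error_bound (ε : ℝ) (hε : 0 < ε)
    (Pmin Pmax P₀ α Δ : ℝ) (h : Pmin ≤ Pmax) :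
    |Pmin + ε * Real.log (1 + Real.exp ((Pmax - Pmin) / ε) /
          (1 + Real.exp ((Pmax - P₀ - α * Δ) / ε)))
        - min (max (P₀ + α * Δ) Pmin) Pmax| ≤ 2 * ε * Real.log 2 := by
  set a := (Pmax - Pmin) / ε with ha_def
  set b := (Pmax - P₀ - α * Δ) / ε with hb_def
  have ha : 0 ≤ a := div_nonneg (by linarith) hε.le
  have hrw : Real.exp a / (1 + Real.exp b)
      = Real.exp (a - Real.log (1 + Real.exp b)) := by
    rw [Real.exp_sub, Real.exp_log (by positivity)]
  have hεa : ε * a = Pmax - Pmin := by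
    rw [ha_def, mul_div_cancel₀ _ hε.ne']
  have hεb : ε * b = Pmax - P₀ - α * Δ := by
    rw [hb_def, mul_div_cancel₀ _ hε.ne']
  have hPmin : Pmin = Pmax - ε * a := by linarith
  have hP0 : P₀ + α * Δ = Pmax - ε * b := by linarith
  have hclamp : min (max (P₀ + α * Δ) Pmin) Pmax
      = Pmax - ε * max (min a b) 0 := by
    rw [hP0, hPmin]
    rcases le_total a b with hab | hab
    · rw [min_eq_left hab, max_eq_left ha,
        max_eq_right (by nlinarith : Pmax - ε * b ≤ Pmax - ε * a),
        min_eq_left (by nlinarith : Pmax - ε * a ≤ Pmax)]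
    · rw [min_eq_right hab,
        max_eq_left (by nlinarith : Pmax - ε * a ≤ Pmax - ε * b)]
      rcases le_total b 0 with h0 | h0
      · rw [max_eq_right h0, min_eq_right (by nlinarith : Pmax ≤ Pmax - ε * b)]; ring
      · rw [max_eq_left h0, min_eq_left (by nlinarith : Pmax - ε * b ≤ Pmax)]
  rw [hrw, hclamp]
  have heq : Pmin + ε * Real.log (1 + Real.exp (a - Real.log (1 + Real.exp b)))
      - (Pmax - ε * max (min a b) 0)
      = ε * (Real.log (1 + Real.exp (a - Real.log (1 + Real.exp b)))
          - (a - max (min a b) 0)) := by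
    rw [hPmin]; ring
  rw [heq, abs_mul, abs_of_pos hε]
  calc ε * |Real.log (1 + Real.exp (a - Real.log (1 + Real.exp b)))
        - (a - max (min a b) 0)|
      ≤ ε * (2 * Real.log 2) := by
        exact mul_le_mul_of_nonneg_left (key_bound a b ha) hε.le
    _ = 2 * ε * Real.log 2 := by ring
end

section
/- Let Q̲ ≤ Q̄ and V̲ ≤ V₀ ≤ V̄ be real numbers, and let (V, Q) satisfy the PV/PQ switching logic: either (Q = Q̄ and V̲ ≤ V ≤ V₀), or (Q̲ ≤ Q ≤ Q̄ and V = V₀), or (Q = Q̲ and V₀ ≤ V ≤ V̄). Then there exist slack variables V⁺, V⁻ with 0 ≤ V⁺ ≤ V̄ − V₀ and 0 ≤ V⁻ ≤ V₀ − V̲ such that V = V₀ + max{V⁺ − Q + Q̲, 0} − max{V⁻ + Q − Q̄, 0}. -/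
/-- Let `Qmin ≤ Qmax` and `Vmin ≤ V₀ ≤ Vmax`, and let `(V, Q)` satisfy the
PV/PQ switching logic: either (`Q = Qmax` and `Vmin ≤ V ≤ V₀`), or
(`Qmin ≤ Q ≤ Qmax` and `V = V₀`), or (`Q = Qmin` and `V₀ ≤ V ≤ Vmax`). Then
there exist slack variables `V⁺, V⁻` with `0 ≤ V⁺ ≤ Vmax − V₀` and
`0 ≤ V⁻ ≤ V₀ − Vmin` such that
`V = V₀ + max {V⁺ − Q + Qmin, 0} − max {V⁻ + Q − Qmax, 0}`. -/
theorem pvpq_switching_slack_representation (Qmin Qmax Vmin V₀ Vmax V Q : ℝ)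
    (hQ : Qmin ≤ Qmax) (hV₀l : Vmin ≤ V₀) (hV₀u : V₀ ≤ Vmax)
    (hlogic : (Q = Qmax ∧ Vmin ≤ V ∧ V ≤ V₀) ∨
              (Qmin ≤ Q ∧ Q ≤ Qmax ∧ V = V₀) ∨
              (Q = Qmin ∧ V₀ ≤ V ∧ V ≤ Vmax)) :
    ∃ Vp Vm : ℝ, 0 ≤ Vp ∧ Vp ≤ Vmax - V₀ ∧ 0 ≤ Vm ∧ Vm ≤ V₀ - Vmin ∧
      V = V₀ + max (Vp - Q + Qmin) 0 - max (Vm + Q - Qmax) 0 := by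
  rcases hlogic with ⟨hq, h1, h2⟩ | ⟨h1, h2, hv⟩ | ⟨hq, h1, h2⟩
  · exact ⟨0, V₀ - V, le_refl 0, by linarith, by linarith, by linarith, by
      rw [max_eq_right (by linarith), max_eq_left (by linarith)]; linarith⟩
  · exact ⟨0, 0, le_refl 0, by linarith, le_refl 0, by linarith, by
      rw [max_eq_right (by linarith), max_eq_right (by linarith)]; linarith⟩
  · exact ⟨V - V₀, 0, by linarith, by linarith, le_refl 0, by linarith, by
      rw [max_eq_left (by linarith), max_eq_right (by linarith)]; linarith⟩
end
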